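/- arXiv:2112.04271 — 2 statements merged into one kernel-verified Lean document; each statement's English description precedes it below -/
import Mathlib

section
/- For any function BWT : Fin n → Σ, the map LF defined by LF(i) = C(BWT[i]) + rank_{BWT[i]}(i), where C(c) = |{j : BWT[j] < c}| and rank_c(i) = |{j < i : BWT[j] = c}|, is a bijection on Fin n. -/
def finPred {n : ℕ} (i : Fin n) : Fin n :=
  ⟨i.val - 1, Nat.lt_of_le_of_lt (Nat.sub_le _ _) i.isLt⟩

/-- C(c) = number of positions j with BWT[j] < c. -/
def Ccount {n : ℕ} {α : Type*} [LinearOrder α] (B : Fin n → α) (c : α) : ℕ :=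
  (Finset.univ.filter (fun j => B j < c)).card

/-- rank_c(B, i) = number of positions j < i with B[j] = c. -/
def rank {n : ℕ} {α : Type*} [LinearOrder α] (B : Fin n → α) (c : α) (i : Fin n) : ℕ :=
  (Finset.univ.filter (fun j => j < i ∧ B j = c)).card

/-- LF(i) = C(BWT[i]) + rank_{BWT[i]}(BWT, i). -/
def LF {n : ℕ} {α : Type*} [LinearOrder α] (B : Fin n → α) (i : Fin n) : ℕ :=
  Ccount B (B i) + rank B (B i) i

/-- Run heads: positions i with i = 0 or B[i] ≠ B[i−1]. -/
def runHeads {n : ℕ} {α : Type*} [LinearOrder α] (B : Fin n → α) : Finset (Fin n) :=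
  Finset.univ.filter (fun i => i.val = 0 ∨ B i ≠ B (finPred i))

/-!
Order the positions lexicographically by the key `(B i, i)`. Then `LF B i` counts exactly the
positions whose key is smaller than that of `i`, i.e. it is the rank of `i` in this strict total
order. The rank of an element of an `n`-element totally ordered set lies in `[0, n)`, and distinct
elements have distinct ranks, so `LF B` is a bijection onto `[0, n)`.
-/

open Finset

section RankBelow

variable {ι β : Type*} [Fintype ι] [LinearOrder β] (f : ι → β)

theorem card_filter_lt_lt_card (i : ι) : #{j | f j < f i} < Fintype.card ι :=
  card_lt_univ_of_notMem (x := i) (by simp)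

variable {f}

theorem card_filter_lt_lt_card_filter_lt {i i' : ι} (h : f i < f i') :
    #{j | f j < f i} < #{j | f j < f i'} := by
  refine card_lt_card (ssubset_iff_of_subset ?_ |>.mpr ⟨i, by simpa using h, by simp⟩)
  intro j
  simpa using fun hj => hj.trans h

theorem injective_card_filter_lt (hf : Function.Injective f) :
    Function.Injective fun i => #{j | f j < f i} := by
  intro i i' h
  by_contra hne
  rcases (hf.ne hne).lt_or_gt with hlt | hlt
  · exact (card_filter_lt_lt_card_filter_lt hlt).ne h
  · exact (card_filter_lt_lt_card_filter_lt hlt).ne' h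

end RankBelow

theorem existsUnique_eq_of_injective_of_lt {n : ℕ} {g : Fin n → ℕ} (hg : Function.Injective g)
    (hlt : ∀ i, g i < n) {m : ℕ} (hm : m < n) : ∃! i, g i = m := by
  let g' : Fin n → Fin n := fun i => ⟨g i, hlt i⟩
  have hg' : Function.Injective g' := fun i i' h => hg (Fin.val_eq_of_eq h)
  obtain ⟨i, hi, huniq⟩ := (Finite.injective_iff_bijective.mp hg').existsUnique ⟨m, hm⟩
  exact ⟨i, Fin.val_eq_of_eq hi, fun i' hi' => huniq i' (Fin.ext hi')⟩

theorem LF_eq_card_filter_toLex_lt {n : ℕ} {α : Type*} [LinearOrder α] (B : Fin n → α)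
    (i : Fin n) : LF B i = #{j | toLex (B j, j) < toLex (B i, i)} := by
  simp only [LF, Ccount, rank, Prod.Lex.toLex_lt_toLex]
  rw [← card_union_of_disjoint (disjoint_filter.mpr fun j _ hlt heq => hlt.ne heq.2), filter_or]
  simp only [and_comm]

theorem LF_lt {n : ℕ} {α : Type*} [LinearOrder α] (B : Fin n → α) (i : Fin n) : LF B i < n := by
  simpa [LF_eq_card_filter_toLex_lt] using
    card_filter_lt_lt_card (fun j => toLex (B j, j)) i

theorem LF_injective {n : ℕ} {α : Type*} [LinearOrder α] (B : Fin n → α) :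
    Function.Injective (LF B) := by
  have hkey : Function.Injective fun j => toLex (B j, j) := fun j j' h => congrArg Prod.snd h
  simpa only [funext (LF_eq_card_filter_toLex_lt B)] using injective_card_filter_lt hkey

theorem stmt5_general {n : ℕ} {α : Type*} [LinearOrder α]
    (B : Fin n → α) :
    (∀ i : Fin n, LF B i < n) ∧ (∀ m : ℕ, m < n → ∃! i : Fin n, LF B i = m) :=
  ⟨LF_lt B, fun _ hm => existsUnique_eq_of_injective_of_lt (LF_injective B) (LF_lt B) hm⟩

/-- For any B : Fin n → α, LF is a bijection onto {0,…,n−1}. -/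
theorem stmt5 {n : ℕ} (hn : 1 ≤ n) {α : Type*} [LinearOrder α] [Fintype α]
    (B : Fin n → α) :
    (∀ i : Fin n, LF B i < n) ∧ (∀ m : ℕ, m < n → ∃! i : Fin n, LF B i = m) :=
  stmt5_general B
end

section
/- With the text T ending in a unique terminator, if BWT[i] = BWT[i+1] then φ(SA[i+1]) = φ(SA[i+1] − 1) + 1, where φ(x) is the suffix-array value preceding x in SA, i.e., φ(SA[j]) = SA[j−1]. Consequently the permutation φ has at most r unbroken incrementing subsequences, where r is the number of runs in the BWT. -/
/-- Lexicographic strict comparison of two length-n strings. -/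
def lexLt {n : ℕ} {α : Type*} [LinearOrder α] (a b : Fin n → α) : Prop :=
  ∃ k : Fin n, (∀ j : Fin n, j < k → a j = b j) ∧ a k < b k

/-- The cyclic rotation of T starting at position k. -/
def rot {n : ℕ} {α : Type*} (T : Fin n → α) (k : Fin n) : Fin n → α :=
  fun j => T (k + j)

section aux
set_option linter.unusedSectionVars false
variable {n : ℕ} [NeZero n] {α : Type*} [LinearOrder α]

lemma finAddOneVal (x : Fin n) (h : x.val + 1 < n) : (x + 1).val = x.val + 1 := by
  rw [Fin.val_add, show ((1:Fin n):ℕ) = 1 % n from rfl,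
    Nat.mod_eq_of_lt (show 1 < n by omega), Nat.mod_eq_of_lt h]

lemma finSubOneVal (x : Fin n) (h : x.val ≠ 0) : (x - 1).val = x.val - 1 := by
  rw [Fin.sub_def]
  show (n - (1:Fin n).val + x.val) % n = _
  have hx := x.isLt
  rw [show ((1:Fin n):ℕ) = 1 % n from rfl, Nat.mod_eq_of_lt (show 1 < n by omega),
    show n - 1 + x.val = (x.val - 1) + n by omega, Nat.add_mod_right,
    Nat.mod_eq_of_lt (by omega)]

lemma lexLt_irrefl (a : Fin n → α) : ¬ lexLt a a := by
  rintro ⟨k, _, hk⟩; exact lt_irrefl _ hk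

lemma lexLt_asymm {a b : Fin n → α} (h1 : lexLt a b) (h2 : lexLt b a) : False := by
  obtain ⟨k1, h1e, h1l⟩ := h1
  obtain ⟨k2, h2e, h2l⟩ := h2
  rcases lt_trichotomy k1 k2 with h | h | h
  · exact h1l.ne' (h2e _ h)
  · subst h; exact lt_asymm h1l h2l
  · exact h2l.ne' (h1e _ h)

/-- If two rotations are lex-ordered and preceded by equal characters, the
rotations shifted one step left are also lex-ordered. -/
lemma shift_down (T : Fin n → α) (term : Fin n)
    (huniq : ∀ a : Fin n, T a = T term → a = term)
    {a b : Fin n} (hab : a ≠ b) (hc : T (a - 1) = T (b - 1))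
    (h : lexLt (rot T a) (rot T b)) : lexLt (rot T (a - 1)) (rot T (b - 1)) := by
  obtain ⟨k, hk1, hk2⟩ := h
  have haterm : a + (term - a) = term := by abel
  have hbterm : b + (term - b) = term := by abel
  have hkn : k.val + 1 < n := by
    by_contra hkn
    have hklast : k.val = n - 1 := by have := k.isLt; omega
    rcases lt_trichotomy (term - a) k with hp | hp | hp
    · have h1 : T (a + (term - a)) = T (b + (term - a)) := hk1 _ hp
      rw [haterm] at h1
      have h2 : b + (term - a) = term := huniq _ h1.symm
      exact hab (add_right_cancel (haterm.trans h2.symm))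
    · rcases lt_trichotomy (term - b) k with hq | hq | hq
      · have h1 : T (a + (term - b)) = T (b + (term - b)) := hk1 _ hq
        rw [hbterm] at h1
        have h2 : a + (term - b) = term := huniq _ h1
        exact hab (add_right_cancel (h2.trans hbterm.symm))
      · exact hab (sub_right_injective (hp.trans hq.symm))
      · have := (term - b).isLt
        have hqv : k.val < (term - b).val := hq
        omega
    · have := (term - a).isLt
      have hpv : k.val < (term - a).val := hp
      omega
  refine ⟨⟨k.val + 1, hkn⟩, ?_, ?_⟩
  · intro j hj
    have hjv : j.val < k.val + 1 := hj
    rcases Nat.eq_zero_or_pos j.val with h0 | h0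
    · have : j = 0 := Fin.ext h0
      subst this
      show T (a - 1 + 0) = T (b - 1 + 0)
      simpa using hc
    · set j0 : Fin n := ⟨j.val - 1, by have := j.isLt; omega⟩ with hj0def
      have hj0k : j0 < k := show j.val - 1 < k.val by omega
      have hjj : j = j0 + 1 := by
        apply Fin.ext
        rw [finAddOneVal j0 (show j.val - 1 + 1 < n by have := j.isLt; omega)]
        show j.val = j.val - 1 + 1
        omega
      have e1 : a - 1 + j = a + j0 := by rw [hjj]; abel
      have e2 : b - 1 + j = b + j0 := by rw [hjj]; abel
      show T (a - 1 + j) = T (b - 1 + j)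
      rw [e1, e2]
      exact hk1 j0 hj0k
  · have hk' : (⟨k.val + 1, hkn⟩ : Fin n) = k + 1 := by
      apply Fin.ext; rw [finAddOneVal k hkn]
    show T (a - 1 + ⟨k.val + 1, hkn⟩) < T (b - 1 + ⟨k.val + 1, hkn⟩)
    rw [hk', show a - 1 + (k + 1) = a + k by abel, show b - 1 + (k + 1) = b + k by abel]
    exact hk2

/-- If two rotations are lex-ordered and start with equal characters, the
rotations shifted one step right are also lex-ordered. -/
lemma shift_up (T : Fin n → α) {a b : Fin n} (hc : T a = T b)
    (h : lexLt (rot T a) (rot T b)) : lexLt (rot T (a + 1)) (rot T (b + 1)) := by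
  obtain ⟨k, hk1, hk2⟩ := h
  have hk0 : k.val ≠ 0 := by
    intro h0
    have : k = 0 := Fin.ext h0
    subst this
    have : T (a + 0) < T (b + 0) := hk2
    simp only [add_zero] at this
    exact hc.symm.not_gt this
  set k' : Fin n := ⟨k.val - 1, by have := k.isLt; omega⟩ with hk'def
  have hkk : k' + 1 = k := by
    apply Fin.ext
    rw [finAddOneVal k' (show k.val - 1 + 1 < n by have := k.isLt; omega)]
    show k.val - 1 + 1 = k.val
    omega
  refine ⟨k', ?_, ?_⟩
  · intro j hj
    have hjv : j.val < k.val - 1 := hj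
    have hjn : j.val + 1 < n := by have := k.isLt; omega
    have hjk : j + 1 < k := by rw [Fin.lt_def, finAddOneVal j hjn]; omega
    have e1 : a + 1 + j = a + (j + 1) := by abel
    have e2 : b + 1 + j = b + (j + 1) := by abel
    show T (a + 1 + j) = T (b + 1 + j)
    rw [e1, e2]
    exact hk1 _ hjk
  · show T (a + 1 + k') < T (b + 1 + k')
    rw [show a + 1 + k' = a + (k' + 1) by abel, show b + 1 + k' = b + (k' + 1) by abel, hkk]
    exact hk2

lemma first_le (T : Fin n → α) {a b : Fin n} (h : lexLt (rot T a) (rot T b)) :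
    T a ≤ T b := by
  obtain ⟨k, hk1, hk2⟩ := h
  rcases eq_or_ne k 0 with rfl | hk
  · have : T (a + 0) < T (b + 0) := hk2
    simpa using this.le
  · have hkpos : (0 : Fin n) < k := Nat.pos_of_ne_zero (fun h => hk (Fin.ext h))
    have : T (a + 0) = T (b + 0) := hk1 0 hkpos
    simpa using this.le

end aux

/-- If BWT[i] = BWT[i+1] then φ(SA[i+1]) = φ(SA[i+1] − 1) + 1; consequently φ has at
most r unbroken incrementing subsequences, r being the number of runs of the BWT. -/
theorem stmt11 {n : ℕ} [NeZero n] {α : Type*} [LinearOrder α]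
    (T : Fin n → α)
    (term : Fin n) (hterm : term = ⟨n - 1, by have := NeZero.pos n; omega⟩)
    (hsmall : ∀ j : Fin n, j ≠ term → T term < T j)
    (SA : Equiv.Perm (Fin n))
    (hSA : ∀ i j : Fin n, i < j → lexLt (rot T (SA i)) (rot T (SA j)))
    (BWT : Fin n → α) (hBWT : ∀ i : Fin n, BWT i = T (SA i - 1))
    (φ : Equiv.Perm (Fin n)) (hφ : ∀ j : Fin n, φ (SA j) = SA (j - 1)) :
    (∀ i : Fin n, ∀ hi : i.val + 1 < n,
      BWT i = BWT ⟨i.val + 1, hi⟩ →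
      (φ (SA ⟨i.val + 1, hi⟩)).val = (φ (SA ⟨i.val + 1, hi⟩ - 1)).val + 1) ∧
    (Finset.univ.filter
        (fun q : Fin n => q.val = 0 ∨ (φ q).val ≠ (φ (finPred q)).val + 1)).card ≤
      (Finset.univ.filter
        (fun i : Fin n => i.val = 0 ∨ BWT i ≠ BWT (finPred i))).card := by
  have huniq : ∀ a : Fin n, T a = T term → a = term := by
    intro a h
    by_contra hne
    exact (hsmall a hne).ne' h
  have rank_lt : ∀ x y : Fin n, lexLt (rot T x) (rot T y) → SA.symm x < SA.symm y := by
    intro x y h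
    rcases lt_trichotomy (SA.symm x) (SA.symm y) with h' | h' | h'
    · exact h'
    · have : x = y := by
        rw [← SA.apply_symm_apply x, ← SA.apply_symm_apply y, h']
      rw [this] at h
      exact absurd h (lexLt_irrefl _)
    · have := hSA _ _ h'
      rw [SA.apply_symm_apply, SA.apply_symm_apply] at this
      exact absurd this (fun h2 => lexLt_asymm h h2)
  have hterm1 : term + 1 = 0 := by
    apply Fin.ext
    rw [Fin.val_add, show ((1:Fin n):ℕ) = 1 % n from rfl, hterm]
    show (n - 1 + 1 % n) % n = ((0:Fin n):ℕ)
    rw [show ((0:Fin n):ℕ) = 0 from rfl]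
    have := NeZero.pos n
    by_cases h1 : n = 1
    · subst h1; rfl
    · rw [Nat.mod_eq_of_lt (show 1 < n by omega), show n - 1 + 1 = n by omega, Nat.mod_self]
  have hzterm : (0 : Fin n) - 1 = term := by
    rw [← hterm1]; abel
  have part1 : ∀ i : Fin n, ∀ hi : i.val + 1 < n,
      BWT i = BWT ⟨i.val + 1, hi⟩ →
      (φ (SA ⟨i.val + 1, hi⟩)).val = (φ (SA ⟨i.val + 1, hi⟩ - 1)).val + 1 := by
    intro i hi hbwt
    set i1 : Fin n := ⟨i.val + 1, hi⟩ with hi1def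
    have hii1 : i < i1 := Nat.lt_succ_self i.val
    have hne : SA i ≠ SA i1 := by
      intro h
      have := SA.injective h
      rw [this] at hii1
      exact lt_irrefl _ hii1
    have hc : T (SA i - 1) = T (SA i1 - 1) := by
      rw [← hBWT, ← hBWT]; exact hbwt
    have hdown := shift_down T term huniq hne hc (hSA i i1 hii1)
    set L : Fin n := SA.symm (SA i - 1) with hLdef
    set L1 : Fin n := SA.symm (SA i1 - 1) with hL1def
    have eL : SA L = SA i - 1 := SA.apply_symm_apply _
    have eL1 : SA L1 = SA i1 - 1 := SA.apply_symm_apply _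
    have hLlt : L < L1 := rank_lt _ _ hdown
    have hcons : L1.val = L.val + 1 := by
      by_contra hcc
      have hLv : L.val < L1.val := hLlt
      have hm : L.val + 1 < L1.val := by omega
      set m : Fin n := ⟨L.val + 1, by have := L1.isLt; omega⟩ with hmdef
      have hLm : L < m := Nat.lt_succ_self L.val
      have hmL1 : m < L1 := show L.val + 1 < L1.val from hm
      have h1 : lexLt (rot T (SA L)) (rot T (SA m)) := hSA L m hLm
      have h2 : lexLt (rot T (SA m)) (rot T (SA L1)) := hSA m L1 hmL1
      have hcm1 : T (SA L) = T (SA m) := by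
        refine le_antisymm (first_le T h1) ?_
        have := first_le T h2
        rw [eL1, ← hc, ← eL] at this
        exact this
      have hcm2 : T (SA m) = T (SA L1) := by
        rw [← hcm1, eL, eL1, hc]
      have hu1 := shift_up T hcm1 h1
      have hu2 := shift_up T hcm2 h2
      rw [eL, show SA i - 1 + 1 = SA i by abel] at hu1
      rw [eL1, show SA i1 - 1 + 1 = SA i1 by abel] at hu2
      have r1 := rank_lt _ _ hu1
      have r2 := rank_lt _ _ hu2
      rw [SA.symm_apply_apply] at r1 r2
      have r1' : i.val < (SA.symm (SA m + 1)).val := r1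
      have r2' : (SA.symm (SA m + 1)).val < i.val + 1 := r2
      omega
    have hSAi0 : SA i ≠ 0 := by
      intro h0
      have hterm' : SA i - 1 = term := by rw [h0, hzterm]
      have h1 : T (SA i1 - 1) = T term := by rw [← hc, hterm']
      have h2 : SA i1 - 1 = term := huniq _ h1
      have h3 : SA i1 = SA i := by
        rw [h0, ← hterm1, ← h2]; abel
      exact hne h3.symm
    have e1 : φ (SA i1) = SA i := by
      rw [hφ i1]
      congr 1
      apply Fin.ext
      rw [finSubOneVal i1 (show i.val + 1 ≠ 0 by omega)]
      show i.val + 1 - 1 = i.val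
      omega
    have e2 : φ (SA i1 - 1) = SA i - 1 := by
      rw [← eL1, hφ L1, ← eL]
      congr 1
      apply Fin.ext
      rw [finSubOneVal L1 (by omega)]
      omega
    rw [e1, e2, finSubOneVal (SA i) (fun h => hSAi0 (Fin.ext h))]
    have : (SA i).val ≠ 0 := fun h => hSAi0 (Fin.ext h)
    omega
  refine ⟨part1, ?_⟩
  apply Finset.card_le_card_of_injOn (fun q => SA.symm q)
  · intro q hq
    simp only [Finset.coe_filter, Set.mem_setOf_eq, Finset.mem_coe, Finset.mem_filter, Finset.mem_univ, true_and] at hq ⊢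
    by_contra hcon
    push_neg at hcon
    obtain ⟨hj0, hjb⟩ := hcon
    set j : Fin n := SA.symm q with hjdef
    have hqj : SA j = q := SA.apply_symm_apply q
    set i : Fin n := finPred j with hidef
    have hival : i.val = j.val - 1 := rfl
    have hj0' : j.val ≠ 0 := hj0
    have hi : i.val + 1 < n := by have := j.isLt; omega
    have hji : j = ⟨i.val + 1, hi⟩ := by
      apply Fin.ext
      show j.val = j.val - 1 + 1
      omega
    have hibwt : BWT i = BWT ⟨i.val + 1, hi⟩ := by rw [← hji]; exact hjb.symm
    have hmain := part1 i hi hibwt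
    rw [← hji, hqj] at hmain
    have hq0 : q.val ≠ 0 := by
      intro h0
      have hqz : q = 0 := Fin.ext h0
      have h1 : T (SA i - 1) = T term := by
        rw [hBWT i] at hibwt
        rw [hibwt, hBWT, ← hji, hqj, hqz, hzterm]
      have h2 := huniq _ h1
      have h3 : SA i = 0 := by rw [← hterm1, ← h2]; abel
      have hij : i = j := SA.injective (by rw [h3, hqj, hqz])
      rw [Fin.ext_iff, hival] at hij
      omega
    have hfp : finPred q = q - 1 := by
      apply Fin.ext
      rw [finSubOneVal q hq0]
      rfl
    rcases hq with h | h
    · exact hq0 h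
    · rw [hfp] at h
      exact h hmain
  · intro a _ b _ h
    exact SA.symm.injective h
end
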